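/- Let e ∈ ℝⁿ with |e| = 1 and let p ∈ [p_min, p_max] with 1 < p_min ≤ p_max < ∞. Then there exist constants C₅, C₆ > 0 depending only on p_max such that for all ξ ∈ ℝⁿ, ⟨|ξ+e|^{p-2}(ξ+e), ξ⟩ ≥ C₅|ξ|^p - C₆. -/

import Mathlib

open Real

/-!
Write `y = ξ + e`. Then `⟨|y|^{p-2} y, ξ⟩ = |y|^{p-2}(|y|² - ⟨y, e⟩) ≥ |y|^{p-1}(|y| - 1)`, and
`t^{p-1}(t - 1) ≥ t^p/2 - 2^{p-1}` for `t ≥ 0`, since `t^{p-1}(t - 1) - t^p/2 = t^{p-1}(t/2 - 1)`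
is nonnegative for `t ≥ 2` and at least `-2^{p-1}` for `t ≤ 2`. Finally `|ξ| ≤ |y| + 1`, so
convexity of `t ↦ t^p` gives `|ξ|^p ≤ 2^{p-1}(|y|^p + 1)`.
-/

theorem Real.rpow_add_le_mul_rpow_add_rpow {a b p : ℝ} (ha : 0 ≤ a) (hb : 0 ≤ b) (hp : 1 ≤ p) :
    (a + b) ^ p ≤ 2 ^ (p - 1) * (a ^ p + b ^ p) := by
  lift a to NNReal using ha
  lift b to NNReal using hb
  exact_mod_cast NNReal.rpow_add_le_mul_rpow_add_rpow a b hp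

theorem Real.rpow_div_two_sub_le_rpow_sub_one_mul_sub_one {t p : ℝ} (ht : 0 ≤ t) (hp : 1 ≤ p) :
    t ^ p / 2 - 2 ^ (p - 1) ≤ t ^ (p - 1) * (t - 1) := by
  have hsplit : t ^ p = t ^ (p - 1) * t := by
    rw [← rpow_add_one' ht (by linarith), sub_add_cancel]
  have hpos : 0 ≤ t ^ (p - 1) := rpow_nonneg ht _
  rcases le_total 2 t with h2t | ht2
  · nlinarith [rpow_pos_of_pos two_pos (p - 1)]
  · have hbound : t ^ (p - 1) ≤ 2 ^ (p - 1) := rpow_le_rpow ht ht2 (by linarith)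
    nlinarith

theorem rpow_sub_one_mul_sub_norm_le_inner_rpow_smul_add {F : Type*} [NormedAddCommGroup F]
    [InnerProductSpace ℝ F] (p : ℝ) (x e : F) :
    ‖x + e‖ ^ (p - 1) * (‖x + e‖ - ‖e‖) ≤ inner ℝ ((‖x + e‖ ^ (p - 2) : ℝ) • (x + e)) x := by
  set y := x + e
  have hx : x = y - e := (add_sub_cancel_right x e).symm
  rcases eq_or_ne y 0 with hy | hy
  · rw [hy, smul_zero, inner_zero_left, norm_zero, zero_sub]
    exact mul_nonpos_of_nonneg_of_nonpos (rpow_nonneg le_rfl _) (neg_nonpos.2 (norm_nonneg e))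
  have hpow : ‖y‖ ^ (p - 1) = ‖y‖ ^ (p - 2) * ‖y‖ := by
    rw [← rpow_add_one (norm_ne_zero_iff.2 hy)]
    ring_nf
  have hinner : ‖y‖ * (‖y‖ - ‖e‖) ≤ inner ℝ y x := by
    rw [hx, inner_sub_right, real_inner_self_eq_norm_sq]
    nlinarith [real_inner_le_norm y e]
  rw [real_inner_smul_left, hpow, mul_assoc]
  exact mul_le_mul_of_nonneg_left hinner (rpow_nonneg (norm_nonneg y) _)

theorem coercivity_estimate_general (n : ℕ) (pmin p : ℝ) (h1 : 1 < pmin)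
    (h2 : pmin ≤ p) (e : EuclideanSpace ℝ (Fin n)) (he : ‖e‖ = 1) :
    ∃ C₅ C₆ : ℝ, 0 < C₅ ∧ 0 < C₆ ∧ ∀ ξ : EuclideanSpace ℝ (Fin n),
      (inner ℝ ((‖ξ + e‖ ^ (p - 2) : ℝ) • (ξ + e)) ξ : ℝ) ≥ C₅ * ‖ξ‖ ^ p - C₆ := by
  have hp : 1 ≤ p := by linarith
  have h2p : (0 : ℝ) < 2 ^ (p - 1) := rpow_pos_of_pos two_pos _
  refine ⟨(2 * 2 ^ (p - 1))⁻¹, 2 ^ (p - 1) + 1 / 2, by positivity, by positivity, fun ξ => ?_⟩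
  have hinner := rpow_sub_one_mul_sub_norm_le_inner_rpow_smul_add p ξ e
  have hscalar := rpow_div_two_sub_le_rpow_sub_one_mul_sub_one (norm_nonneg (ξ + e)) hp
  have hξ : ‖ξ‖ ^ p ≤ 2 ^ (p - 1) * (‖ξ + e‖ ^ p + 1) := by
    have htri : ‖ξ‖ ≤ ‖ξ + e‖ + ‖e‖ := by
      simpa using norm_sub_le (ξ + e) e
    calc ‖ξ‖ ^ p ≤ (‖ξ + e‖ + 1) ^ p := by
          gcongr
          rwa [← he]
      _ ≤ 2 ^ (p - 1) * (‖ξ + e‖ ^ p + 1 ^ p) :=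
          rpow_add_le_mul_rpow_add_rpow (norm_nonneg _) zero_le_one hp
      _ = 2 ^ (p - 1) * (‖ξ + e‖ ^ p + 1) := by rw [one_rpow]
  have hC₅ : (2 * 2 ^ (p - 1))⁻¹ * ‖ξ‖ ^ p ≤ (‖ξ + e‖ ^ p + 1) / 2 := by
    rw [inv_mul_le_iff₀ (by positivity)]
    linarith
  rw [he] at hinner
  linarith

/-- Coercivity of `A(x,ξ) = |ξ+e|^{p-2}(ξ+e)`: for `|e|=1` and
`1 < p_min ≤ p ≤ p_max < ∞`, there exist `C₅, C₆ > 0`, depending only on `p_max`,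
such that `⟨|ξ+e|^{p-2}(ξ+e), ξ⟩ ≥ C₅|ξ|^p - C₆` for all `ξ`. -/
theorem coercivity_estimate (n : ℕ) (pmin pmax p : ℝ) (h1 : 1 < pmin)
    (h2 : pmin ≤ p) (h3 : p ≤ pmax) (e : EuclideanSpace ℝ (Fin n)) (he : ‖e‖ = 1) :
    ∃ C₅ C₆ : ℝ, 0 < C₅ ∧ 0 < C₆ ∧ ∀ ξ : EuclideanSpace ℝ (Fin n),
      (inner ℝ ((‖ξ + e‖ ^ (p - 2) : ℝ) • (ξ + e)) ξ : ℝ) ≥ C₅ * ‖ξ‖ ^ p - C₆ :=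
  coercivity_estimate_general n pmin p h1 h2 e he
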